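/- arXiv:1911.07875 — 4 statements merged into one kernel-verified Lean document; each statement's English description precedes it below -/
import Mathlib

section
/- Let X be a random vector in {-1,1}^n and Y a random variable in {-1,1} with E[XX^T] invertible. Let β* = (E[XX^T])^{-1} E[YX] minimize the clean squared risk E[(Y - β^T X)^2] over β ∈ R^n. Under symmetric dependent (Sy-De) attribute noise with rate p < 1/2, where with probability 1-p the observed vector is X and with probability p it is -X (independently of (X,Y)), the minimizer β̃* of the corrupted squared risk (1-p)E[(Y - β^T X)^2] + p E[(Y + β^T X)^2] satisfies β̃* = (1-2p)β*. -/
open MeasureTheory Matrix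

lemma aux_quad_zero {a b : ℝ} (ha : 0 ≤ a) (h : ∀ t : ℝ, 0 ≤ a * t ^ 2 + b * t) :
    b = 0 := by
  have hpos : (0:ℝ) < a + 1 := by linarith
  have h2 := h (-b / (a + 1))
  have heq : a * (-b / (a + 1)) ^ 2 + b * (-b / (a + 1)) = -b ^ 2 / (a + 1) ^ 2 := by
    field_simp
    ring
  rw [heq] at h2
  have h3 : 0 ≤ (-b ^ 2 / (a + 1) ^ 2) * (a + 1) ^ 2 :=
    mul_nonneg h2 (sq_nonneg _)
  rw [div_mul_cancel₀ _ (by positivity : ((a:ℝ) + 1) ^ 2 ≠ 0)] at h3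
  have hb2 : b ^ 2 = 0 := le_antisymm (by linarith) (sq_nonneg b)
  exact pow_eq_zero_iff two_ne_zero |>.mp hb2

/-- Sy-De attribute noise: the minimizer of the corrupted squared risk is
`(1-2p)` times the clean squared-risk minimizer `β* = (E[XXᵀ])⁻¹ E[YX]`. -/
theorem syde_sq_minimizer {n : ℕ} {Ω : Type*} [MeasurableSpace Ω]
    (μ : Measure Ω) [IsProbabilityMeasure μ]
    (X : Ω → Fin n → ℝ) (Y : Ω → ℝ)
    (hX : Measurable X) (hY : Measurable Y)
    (hXval : ∀ ω i, X ω i = 1 ∨ X ω i = -1)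
    (hYval : ∀ ω, Y ω = 1 ∨ Y ω = -1)
    (M : Matrix (Fin n) (Fin n) ℝ)
    (hM : M = Matrix.of fun i j => ∫ ω, X ω i * X ω j ∂μ)
    (hMinv : IsUnit M.det)
    (v : Fin n → ℝ) (hv : v = fun i => ∫ ω, Y ω * X ω i ∂μ)
    (βstar : Fin n → ℝ) (hβstar : βstar = M⁻¹ *ᵥ v)
    (hβstarmin : ∀ β : Fin n → ℝ,
      (∫ ω, (Y ω - βstar ⬝ᵥ X ω) ^ 2 ∂μ) ≤ ∫ ω, (Y ω - β ⬝ᵥ X ω) ^ 2 ∂μ)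
    (p : ℝ) (hp0 : 0 ≤ p) (hp : p < 1 / 2)
    (Rc : (Fin n → ℝ) → ℝ)
    (hRc : Rc = fun β => (1 - p) * ∫ ω, (Y ω - β ⬝ᵥ X ω) ^ 2 ∂μ
      + p * ∫ ω, (Y ω + β ⬝ᵥ X ω) ^ 2 ∂μ)
    (βt : Fin n → ℝ) (hβt : ∀ β, Rc βt ≤ Rc β) :
    βt = (1 - 2 * p) • βstar := by
  classical
  have hXi : ∀ i, Measurable fun ω => X ω i := fun i => (measurable_pi_apply i).comp hX
  have habsX : ∀ ω i, |X ω i| ≤ 1 := by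
    intro ω i; rcases hXval ω i with h | h <;> simp [h]
  have habsY : ∀ ω, |Y ω| ≤ 1 := by
    intro ω; rcases hYval ω with h | h <;> simp [h]
  have hbound : ∀ f : Ω → ℝ, Measurable f → (∀ ω, |f ω| ≤ 1) → Integrable f μ := by
    intro f hf hb
    exact (integrable_const (1:ℝ)).mono' hf.aestronglyMeasurable
      (ae_of_all μ (by simpa using hb))
  have hIntXX : ∀ i j, Integrable (fun ω => X ω i * X ω j) μ := by
    intro i j
    refine hbound _ ((hXi i).mul (hXi j)) fun ω => ?_
    calc |X ω i * X ω j| = |X ω i| * |X ω j| := abs_mul _ _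
      _ ≤ 1 * 1 := mul_le_mul (habsX ω i) (habsX ω j) (abs_nonneg _) zero_le_one
      _ = 1 := one_mul 1
  have hIntYX : ∀ i, Integrable (fun ω => Y ω * X ω i) μ := by
    intro i
    refine hbound _ (hY.mul (hXi i)) fun ω => ?_
    calc |Y ω * X ω i| = |Y ω| * |X ω i| := abs_mul _ _
      _ ≤ 1 * 1 := mul_le_mul (habsY ω) (habsX ω i) (abs_nonneg _) zero_le_one
      _ = 1 := one_mul 1
  have hIntY2 : Integrable (fun ω => Y ω ^ 2) μ := by
    refine hbound _ (hY.pow_const 2) fun ω => ?_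
    rcases hYval ω with h | h <;> simp [h]
  -- pointwise rewrites
  have hYdX_eq : ∀ (β : Fin n → ℝ),
      (fun ω => Y ω * (β ⬝ᵥ X ω)) = fun ω => ∑ i, β i * (Y ω * X ω i) := by
    intro β; funext ω
    rw [dotProduct, Finset.mul_sum]
    exact Finset.sum_congr rfl fun i _ => by ring
  have hddX_eq : ∀ (β γ : Fin n → ℝ),
      (fun ω => (β ⬝ᵥ X ω) * (γ ⬝ᵥ X ω))
        = fun ω => ∑ i, ∑ j, (β i * γ j) * (X ω i * X ω j) := by
    intro β γ; funext ω
    rw [dotProduct, dotProduct, Finset.sum_mul_sum]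
    exact Finset.sum_congr rfl fun i _ => Finset.sum_congr rfl fun j _ => by ring
  have hIntYdX : ∀ β : Fin n → ℝ, Integrable (fun ω => Y ω * (β ⬝ᵥ X ω)) μ := by
    intro β
    rw [hYdX_eq β]
    exact integrable_finset_sum _ fun i _ => (hIntYX i).const_mul _
  have hIntddX : ∀ β γ : Fin n → ℝ,
      Integrable (fun ω => (β ⬝ᵥ X ω) * (γ ⬝ᵥ X ω)) μ := by
    intro β γ
    rw [hddX_eq β γ]
    exact integrable_finset_sum _ fun i _ =>
      integrable_finset_sum _ fun j _ => (hIntXX i j).const_mul _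
  have hL : ∀ β : Fin n → ℝ, (∫ ω, Y ω * (β ⬝ᵥ X ω) ∂μ) = β ⬝ᵥ v := by
    intro β
    rw [hYdX_eq β, integral_finset_sum _ fun i _ => (hIntYX i).const_mul _]
    simp only [integral_const_mul, hv, dotProduct]
  have hQ : ∀ β γ : Fin n → ℝ,
      (∫ ω, (β ⬝ᵥ X ω) * (γ ⬝ᵥ X ω) ∂μ) = β ⬝ᵥ (M *ᵥ γ) := by
    intro β γ
    rw [hddX_eq β γ, integral_finset_sum _ fun i _ =>
      integrable_finset_sum _ fun j _ => (hIntXX i j).const_mul _]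
    have : ∀ i, (∫ ω, ∑ j, (β i * γ j) * (X ω i * X ω j) ∂μ)
        = ∑ j, (β i * γ j) * ∫ ω, X ω i * X ω j ∂μ := by
      intro i
      rw [integral_finset_sum _ fun j _ => (hIntXX i j).const_mul _]
      simp only [integral_const_mul]
    simp only [this, dotProduct, mulVec, hM, Matrix.of_apply, Finset.mul_sum]
    exact Finset.sum_congr rfl fun i _ => Finset.sum_congr rfl fun j _ => by ring
  have hsymm : ∀ β γ : Fin n → ℝ, β ⬝ᵥ (M *ᵥ γ) = γ ⬝ᵥ (M *ᵥ β) := by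
    intro β γ
    rw [← hQ β γ, ← hQ γ β]
    exact integral_congr_ae (ae_of_all μ fun ω => mul_comm _ _)
  have hQnn : ∀ β : Fin n → ℝ, 0 ≤ β ⬝ᵥ (M *ᵥ β) := by
    intro β
    rw [← hQ β β]
    exact integral_nonneg fun ω => mul_self_nonneg _
  -- closed form of Rc
  set A := ∫ ω, Y ω ^ 2 ∂μ with hA
  have hRcval : ∀ β : Fin n → ℝ,
      Rc β = A - 2 * (1 - 2 * p) * (β ⬝ᵥ v) + β ⬝ᵥ (M *ᵥ β) := by
    intro β
    have e1 : (∫ ω, (Y ω - β ⬝ᵥ X ω) ^ 2 ∂μ)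
        = A - 2 * (β ⬝ᵥ v) + β ⬝ᵥ (M *ᵥ β) := by
      have hpt : (fun ω => (Y ω - β ⬝ᵥ X ω) ^ 2)
          = fun ω => (Y ω ^ 2 - 2 * (Y ω * (β ⬝ᵥ X ω))) + (β ⬝ᵥ X ω) * (β ⬝ᵥ X ω) := by
        funext ω; ring
      have i1 : Integrable (fun ω => Y ω ^ 2 - 2 * (Y ω * (β ⬝ᵥ X ω))) μ :=
        hIntY2.sub ((hIntYdX β).const_mul 2)
      have e1a : (∫ ω, ((Y ω ^ 2 - 2 * (Y ω * (β ⬝ᵥ X ω))) + (β ⬝ᵥ X ω) * (β ⬝ᵥ X ω)) ∂μ)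
          = (∫ ω, (Y ω ^ 2 - 2 * (Y ω * (β ⬝ᵥ X ω))) ∂μ) + ∫ ω, (β ⬝ᵥ X ω) * (β ⬝ᵥ X ω) ∂μ :=
        integral_add i1 (hIntddX β β)
      have e1b : (∫ ω, (Y ω ^ 2 - 2 * (Y ω * (β ⬝ᵥ X ω))) ∂μ)
          = (∫ ω, Y ω ^ 2 ∂μ) - ∫ ω, 2 * (Y ω * (β ⬝ᵥ X ω)) ∂μ :=
        integral_sub hIntY2 ((hIntYdX β).const_mul 2)
      rw [hpt, e1a, e1b, integral_const_mul, hL, hQ, ← hA]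
    have e2 : (∫ ω, (Y ω + β ⬝ᵥ X ω) ^ 2 ∂μ)
        = A + 2 * (β ⬝ᵥ v) + β ⬝ᵥ (M *ᵥ β) := by
      have hpt : (fun ω => (Y ω + β ⬝ᵥ X ω) ^ 2)
          = fun ω => (Y ω ^ 2 + 2 * (Y ω * (β ⬝ᵥ X ω))) + (β ⬝ᵥ X ω) * (β ⬝ᵥ X ω) := by
        funext ω; ring
      have i1 : Integrable (fun ω => Y ω ^ 2 + 2 * (Y ω * (β ⬝ᵥ X ω))) μ :=
        hIntY2.add ((hIntYdX β).const_mul 2)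
      have e2a : (∫ ω, ((Y ω ^ 2 + 2 * (Y ω * (β ⬝ᵥ X ω))) + (β ⬝ᵥ X ω) * (β ⬝ᵥ X ω)) ∂μ)
          = (∫ ω, (Y ω ^ 2 + 2 * (Y ω * (β ⬝ᵥ X ω))) ∂μ) + ∫ ω, (β ⬝ᵥ X ω) * (β ⬝ᵥ X ω) ∂μ :=
        integral_add i1 (hIntddX β β)
      have e2b : (∫ ω, (Y ω ^ 2 + 2 * (Y ω * (β ⬝ᵥ X ω))) ∂μ)
          = (∫ ω, Y ω ^ 2 ∂μ) + ∫ ω, 2 * (Y ω * (β ⬝ᵥ X ω)) ∂μ :=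
        integral_add hIntY2 ((hIntYdX β).const_mul 2)
      rw [hpt, e2a, e2b, integral_const_mul, hL, hQ, ← hA]
    rw [hRc]
    simp only
    rw [e1, e2]
    ring
  -- first-order condition
  have hgrad : ∀ d : Fin n → ℝ, d ⬝ᵥ (M *ᵥ βt) = (1 - 2 * p) * (d ⬝ᵥ v) := by
    intro d
    have key : ∀ t : ℝ, 0 ≤ (d ⬝ᵥ (M *ᵥ d)) * t ^ 2
        + (2 * (d ⬝ᵥ (M *ᵥ βt)) - 2 * (1 - 2 * p) * (d ⬝ᵥ v)) * t := by
      intro t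
      have h1 := hβt (βt + t • d)
      rw [hRcval, hRcval] at h1
      simp only [add_dotProduct, smul_dotProduct, Matrix.mulVec_add, Matrix.mulVec_smul,
        dotProduct_add, dotProduct_smul, smul_eq_mul] at h1
      rw [hsymm βt d] at h1
      nlinarith [h1]
    have hb := aux_quad_zero (hQnn d) key
    linarith
  have hMβt : M *ᵥ βt = (1 - 2 * p) • v := by
    funext i
    have h := hgrad (Pi.single i 1)
    simpa [dotProduct, Pi.single_apply, Finset.sum_ite_eq] using h
  have hβt_eq : βt = M⁻¹ *ᵥ (M *ᵥ βt) := by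
    rw [Matrix.mulVec_mulVec, Matrix.nonsing_inv_mul M hMinv, Matrix.one_mulVec]
  rw [hβt_eq, hMβt, Matrix.mulVec_smul, hβstar]
end

section
/- Under the assumptions of the previous statement (Sy-De attribute noise with rate p < 1/2, E[XX^T] invertible), the minimizer β̃* of the corrupted squared risk satisfies sign(β̃*^T x) = sign(β*^T x) for all x, and consequently the 0-1 risk of the classifier sign(β̃*^T x) under the clean distribution equals that of sign(β*^T x); i.e., squared loss with origin-passing linear classifiers is Sy-De attribute-noise robust. -/
open MeasureTheory Matrix

private lemma intg_of_bound {Ω : Type*} [MeasurableSpace Ω] (μ : Measure Ω)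
    [IsProbabilityMeasure μ] {f : Ω → ℝ} (hf : Measurable f) (C : ℝ)
    (h : ∀ ω, |f ω| ≤ C) : Integrable f μ :=
  (integrable_const C).mono' hf.aestronglyMeasurable (ae_of_all _ h)

/-- Sy-De robustness of squared loss with origin-passing linear classifiers:
the corrupted-risk minimizer induces the same sign function as the clean
minimizer, hence the same clean 0-1 risk. -/
theorem syde_sq_robust {n : ℕ} {Ω : Type*} [MeasurableSpace Ω]
    (μ : Measure Ω) [IsProbabilityMeasure μ]
    (X : Ω → Fin n → ℝ) (Y : Ω → ℝ)
    (hX : Measurable X) (hY : Measurable Y)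
    (hXval : ∀ ω i, X ω i = 1 ∨ X ω i = -1)
    (hYval : ∀ ω, Y ω = 1 ∨ Y ω = -1)
    (M : Matrix (Fin n) (Fin n) ℝ)
    (hM : M = Matrix.of fun i j => ∫ ω, X ω i * X ω j ∂μ)
    (hMinv : IsUnit M.det)
    (v : Fin n → ℝ) (hv : v = fun i => ∫ ω, Y ω * X ω i ∂μ)
    (βstar : Fin n → ℝ) (hβstar : βstar = M⁻¹ *ᵥ v)
    (p : ℝ) (hp0 : 0 ≤ p) (hp : p < 1 / 2)
    (Rc : (Fin n → ℝ) → ℝ)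
    (hRc : Rc = fun β => (1 - p) * ∫ ω, (Y ω - β ⬝ᵥ X ω) ^ 2 ∂μ
      + p * ∫ ω, (Y ω + β ⬝ᵥ X ω) ^ 2 ∂μ)
    (βt : Fin n → ℝ) (hβt : ∀ β, Rc βt ≤ Rc β) :
    (∀ x : Fin n → ℝ, Real.sign (βt ⬝ᵥ x) = Real.sign (βstar ⬝ᵥ x)) ∧
    μ {ω | Real.sign (βt ⬝ᵥ X ω) ≠ Y ω} = μ {ω | Real.sign (βstar ⬝ᵥ X ω) ≠ Y ω} := by
  -- basic measurability and boundedness facts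
  have hXi : ∀ i, Measurable fun ω => X ω i := fun i => (measurable_pi_apply i).comp hX
  have hXb : ∀ ω i, |X ω i| ≤ 1 := by intro ω i; rcases hXval ω i with h | h <;> simp [h]
  have hYb : ∀ ω, |Y ω| ≤ 1 := by intro ω; rcases hYval ω with h | h <;> simp [h]
  have hdm : ∀ w : Fin n → ℝ, Measurable fun ω => w ⬝ᵥ X ω := by
    intro w
    show Measurable fun ω => ∑ i, w i * X ω i
    exact Finset.measurable_sum _ fun i _ => measurable_const.mul (hXi i)
  have hdb : ∀ (w : Fin n → ℝ) ω, |w ⬝ᵥ X ω| ≤ ∑ i, |w i| := by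
    intro w ω
    show |∑ i, w i * X ω i| ≤ ∑ i, |w i|
    calc |∑ i, w i * X ω i| ≤ ∑ i, |w i * X ω i| := Finset.abs_sum_le_sum_abs _ _
      _ ≤ ∑ i, |w i| := Finset.sum_le_sum fun i _ => by
          rw [abs_mul]
          exact mul_le_of_le_one_right (abs_nonneg _) (hXb ω i)
  -- integrability facts
  have iXX : ∀ i j, Integrable (fun ω => X ω i * X ω j) μ := by
    intro i j
    refine intg_of_bound μ ((hXi i).mul (hXi j)) 1 fun ω => ?_
    rw [abs_mul]
    exact mul_le_one₀ (hXb ω i) (abs_nonneg _) (hXb ω j)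
  have iYX : ∀ j, Integrable (fun ω => Y ω * X ω j) μ := by
    intro j
    refine intg_of_bound μ (hY.mul (hXi j)) 1 fun ω => ?_
    rw [abs_mul]
    exact mul_le_one₀ (hYb ω) (abs_nonneg _) (hXb ω j)
  have iXd : ∀ i (w : Fin n → ℝ), Integrable (fun ω => X ω i * (w ⬝ᵥ X ω)) μ := by
    intro i w
    refine intg_of_bound μ ((hXi i).mul (hdm w)) (∑ k, |w k|) fun ω => ?_
    rw [abs_mul]
    calc |X ω i| * |w ⬝ᵥ X ω| ≤ 1 * (∑ k, |w k|) :=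
          mul_le_mul (hXb ω i) (hdb w ω) (abs_nonneg _) zero_le_one
      _ = ∑ k, |w k| := one_mul _
  have iYd : ∀ w : Fin n → ℝ, Integrable (fun ω => Y ω * (w ⬝ᵥ X ω)) μ := by
    intro w
    refine intg_of_bound μ (hY.mul (hdm w)) (∑ k, |w k|) fun ω => ?_
    rw [abs_mul]
    calc |Y ω| * |w ⬝ᵥ X ω| ≤ 1 * (∑ k, |w k|) :=
          mul_le_mul (hYb ω) (hdb w ω) (abs_nonneg _) zero_le_one
      _ = ∑ k, |w k| := one_mul _
  have idd : ∀ u w : Fin n → ℝ, Integrable (fun ω => (u ⬝ᵥ X ω) * (w ⬝ᵥ X ω)) μ := by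
    intro u w
    refine intg_of_bound μ ((hdm u).mul (hdm w)) ((∑ k, |u k|) * (∑ k, |w k|)) fun ω => ?_
    rw [abs_mul]
    exact mul_le_mul (hdb u ω) (hdb w ω) (abs_nonneg _)
      (Finset.sum_nonneg fun k _ => abs_nonneg _)
  have iY2 : Integrable (fun ω => Y ω ^ 2) μ := by
    refine intg_of_bound μ (hY.pow_const 2) 1 fun ω => ?_
    rcases hYval ω with h | h <;> simp [h]
  -- key integral identities
  have hInner : ∀ (w : Fin n → ℝ) i, ∫ ω, X ω i * (w ⬝ᵥ X ω) ∂μ = (M *ᵥ w) i := by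
    intro w i
    have h1 : (fun ω => X ω i * (w ⬝ᵥ X ω)) = fun ω => ∑ j, w j * (X ω i * X ω j) := by
      funext ω
      show X ω i * ∑ j, w j * X ω j = _
      rw [Finset.mul_sum]
      exact Finset.sum_congr rfl fun j _ => by ring
    rw [h1, integral_finset_sum _ fun j _ => ((iXX i j).const_mul (w j))]
    show _ = ∑ j, M i j * w j
    refine Finset.sum_congr rfl fun j _ => ?_
    rw [integral_const_mul _ _, hM]
    simp [mul_comm]
  have hYdot : ∀ w : Fin n → ℝ, ∫ ω, Y ω * (w ⬝ᵥ X ω) ∂μ = w ⬝ᵥ v := by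
    intro w
    have h1 : (fun ω => Y ω * (w ⬝ᵥ X ω)) = fun ω => ∑ j, w j * (Y ω * X ω j) := by
      funext ω
      show Y ω * ∑ j, w j * X ω j = _
      rw [Finset.mul_sum]
      exact Finset.sum_congr rfl fun j _ => by ring
    rw [h1, integral_finset_sum _ fun j _ => ((iYX j).const_mul (w j))]
    show _ = ∑ j, w j * v j
    refine Finset.sum_congr rfl fun j _ => ?_
    rw [integral_const_mul _ _, hv]
  have key : ∀ u w : Fin n → ℝ, ∫ ω, (u ⬝ᵥ X ω) * (w ⬝ᵥ X ω) ∂μ = u ⬝ᵥ (M *ᵥ w) := by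
    intro u w
    have h1 : (fun ω => (u ⬝ᵥ X ω) * (w ⬝ᵥ X ω))
        = fun ω => ∑ i, u i * (X ω i * (w ⬝ᵥ X ω)) := by
      funext ω
      show (∑ i, u i * X ω i) * (w ⬝ᵥ X ω) = _
      rw [Finset.sum_mul]
      exact Finset.sum_congr rfl fun i _ => by ring
    rw [h1, integral_finset_sum _ fun i _ => ((iXd i w).const_mul (u i))]
    show _ = ∑ i, u i * (M *ᵥ w) i
    refine Finset.sum_congr rfl fun i _ => ?_
    rw [integral_const_mul _ _, hInner]
  have hsymm : ∀ u w : Fin n → ℝ, u ⬝ᵥ (M *ᵥ w) = w ⬝ᵥ (M *ᵥ u) := by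
    intro u w
    rw [← key u w, ← key w u]
    congr 1; funext ω; ring
  -- expansion of the corrupted risk
  have hRcEq : ∀ β : Fin n → ℝ, Rc β
      = (∫ ω, Y ω ^ 2 ∂μ) - 2 * (1 - 2 * p) * (β ⬝ᵥ v) + β ⬝ᵥ (M *ᵥ β) := by
    intro β
    have iA : Integrable (fun ω => (Y ω - β ⬝ᵥ X ω) ^ 2) μ := by
      have : (fun ω => (Y ω - β ⬝ᵥ X ω) ^ 2)
          = fun ω => Y ω ^ 2 - 2 * (Y ω * (β ⬝ᵥ X ω)) + (β ⬝ᵥ X ω) * (β ⬝ᵥ X ω) := by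
        funext ω; ring
      rw [this]
      exact (iY2.sub ((iYd β).const_mul 2)).add (idd β β)
    have iB : Integrable (fun ω => (Y ω + β ⬝ᵥ X ω) ^ 2) μ := by
      have : (fun ω => (Y ω + β ⬝ᵥ X ω) ^ 2)
          = fun ω => Y ω ^ 2 + 2 * (Y ω * (β ⬝ᵥ X ω)) + (β ⬝ᵥ X ω) * (β ⬝ᵥ X ω) := by
        funext ω; ring
      rw [this]
      exact (iY2.add ((iYd β).const_mul 2)).add (idd β β)
    have e1 : Rc β = ∫ ω, ((1 - p) * (Y ω - β ⬝ᵥ X ω) ^ 2 + p * (Y ω + β ⬝ᵥ X ω) ^ 2) ∂μ := by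
      rw [hRc]
      rw [integral_add (iA.const_mul (1 - p)) (iB.const_mul p),
        integral_const_mul _ _, integral_const_mul _ _]
    have e2 : (fun ω => (1 - p) * (Y ω - β ⬝ᵥ X ω) ^ 2 + p * (Y ω + β ⬝ᵥ X ω) ^ 2)
        = fun ω => Y ω ^ 2 - 2 * (1 - 2 * p) * (Y ω * (β ⬝ᵥ X ω))
          + (β ⬝ᵥ X ω) * (β ⬝ᵥ X ω) := by
      funext ω; ring
    have i1 : Integrable (fun ω => Y ω ^ 2 - 2 * (1 - 2 * p) * (Y ω * (β ⬝ᵥ X ω))) μ :=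
      iY2.sub ((iYd β).const_mul (2 * (1 - 2 * p)))
    rw [e1, e2, integral_add i1 (idd β β), integral_sub iY2 ((iYd β).const_mul (2 * (1 - 2 * p))),
      integral_const_mul _ _, hYdot β, key β β]
  -- the critical point
  have hMβ : M *ᵥ βstar = v := by
    rw [hβstar, Matrix.mulVec_mulVec, Matrix.mul_nonsing_inv _ hMinv, Matrix.one_mulVec]
  set β₀ : Fin n → ℝ := (1 - 2 * p) • βstar with hβ₀
  have hMβ₀ : M *ᵥ β₀ = (1 - 2 * p) • v := by rw [hβ₀, Matrix.mulVec_smul, hMβ]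
  set w : Fin n → ℝ := βt - β₀ with hw
  have hβtw : βt = β₀ + w := by rw [hw]; ring
  have hq : Rc βt = Rc β₀ + w ⬝ᵥ (M *ᵥ w) := by
    rw [hRcEq βt, hRcEq β₀, hβtw]
    simp only [add_dotProduct, Matrix.mulVec_add, dotProduct_add, hsymm β₀ w, hMβ₀,
      dotProduct_smul, smul_eq_mul]
    ring
  -- the quadratic term vanishes
  have hqnn : 0 ≤ w ⬝ᵥ (M *ᵥ w) := by
    rw [← key w w]
    exact integral_nonneg fun ω => mul_self_nonneg _
  have hq0 : w ⬝ᵥ (M *ᵥ w) = 0 := le_antisymm (by have := hβt β₀; linarith [hq ▸ this]) hqnn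
  have hae : (fun ω => (w ⬝ᵥ X ω) * (w ⬝ᵥ X ω)) =ᵐ[μ] 0 := by
    rw [← integral_eq_zero_iff_of_nonneg (fun ω => mul_self_nonneg _) (idd w w)]
    rw [key w w]; exact hq0
  have hdae : (fun ω => w ⬝ᵥ X ω) =ᵐ[μ] 0 := by
    filter_upwards [hae] with ω hω
    exact mul_self_eq_zero.mp hω
  have hMw : M *ᵥ w = 0 := by
    funext i
    rw [← hInner w i]
    have : (fun ω => X ω i * (w ⬝ᵥ X ω)) =ᵐ[μ] 0 := by
      filter_upwards [hdae] with ω hω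
      simp [hω]
    rw [integral_congr_ae this]
    simp
  have hw0 : w = 0 := by
    have h1 : M⁻¹ *ᵥ (M *ᵥ w) = w := by
      rw [Matrix.mulVec_mulVec, Matrix.nonsing_inv_mul _ hMinv, Matrix.one_mulVec]
    rw [← h1, hMw, Matrix.mulVec_zero]
  have hβtβ₀ : βt = (1 - 2 * p) • βstar := by
    rw [hβtw, hw0, add_zero, hβ₀]
  have hc : (0 : ℝ) < 1 - 2 * p := by linarith
  have hsign : ∀ x : Fin n → ℝ, Real.sign (βt ⬝ᵥ x) = Real.sign (βstar ⬝ᵥ x) := by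
    intro x
    rw [hβtβ₀, smul_dotProduct, smul_eq_mul]
    rcases lt_trichotomy (βstar ⬝ᵥ x) 0 with h | h | h
    · rw [Real.sign_of_neg (mul_neg_of_pos_of_neg hc h), Real.sign_of_neg h]
    · simp [h]
    · rw [Real.sign_of_pos (mul_pos hc h), Real.sign_of_pos h]
  refine ⟨hsign, ?_⟩
  congr 1
  ext ω
  simp [hsign (X ω)]
end

section
/- For the distribution D with atoms ((-1,1),1) w.p. 1/4, ((-1,-1),-1) w.p. 1/2, ((1,-1),1) w.p. 1/4, under Asy-In attribute noise where coordinate 1 flips independently with probability p₁ and coordinate 2 with probability p₂, the minimizer (b̃₁*, b̃₂*) of the corrupted squared risk satisfies b̃₁* = (1-2p₁)/2 and b̃₂* = (1-2p₂)/2. -/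
/-- Asy-In corrupted squared risk of f(x)=b₁x₁+b₂x₂ for D with atoms
((-1,1),1) w.p. 1/4, ((-1,-1),-1) w.p. 1/2, ((1,-1),1) w.p. 1/4, where
coordinate i flips independently with probability pᵢ. -/
noncomputable def corrSqRisk (p₁ p₂ b₁ b₂ : ℝ) : ℝ :=
  (1 - p₁) * (1 - p₂) *
      ((1/4) * (1 - (b₁ * (-1) + b₂ * 1))^2 + (1/2) * (-1 - (b₁ * (-1) + b₂ * (-1)))^2
        + (1/4) * (1 - (b₁ * 1 + b₂ * (-1)))^2)
    + p₁ * p₂ *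
      ((1/4) * (1 - (b₁ * 1 + b₂ * (-1)))^2 + (1/2) * (-1 - (b₁ * 1 + b₂ * 1))^2
        + (1/4) * (1 - (b₁ * (-1) + b₂ * 1))^2)
    + (1 - p₁) * p₂ *
      ((1/4) * (1 - (b₁ * (-1) + b₂ * (-1)))^2 + (1/2) * (-1 - (b₁ * (-1) + b₂ * 1))^2
        + (1/4) * (1 - (b₁ * 1 + b₂ * 1))^2)
    + p₁ * (1 - p₂) *
      ((1/4) * (1 - (b₁ * 1 + b₂ * 1))^2 + (1/2) * (-1 - (b₁ * 1 + b₂ * (-1)))^2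
        + (1/4) * (1 - (b₁ * (-1) + b₂ * (-1)))^2)

/-- Any minimizer (bt₁, bt₂) of the Asy-In corrupted squared risk satisfies
bt₁ = (1-2p₁)/2 and bt₂ = (1-2p₂)/2. -/
theorem corr_sq_risk_minimizer (p₁ p₂ : ℝ) (hp₁ : 0 ≤ p₁) (hp₁' : p₁ ≤ 1)
    (hp₂ : 0 ≤ p₂) (hp₂' : p₂ ≤ 1) (bt₁ bt₂ : ℝ)
    (hmin : ∀ b₁ b₂ : ℝ, corrSqRisk p₁ p₂ bt₁ bt₂ ≤ corrSqRisk p₁ p₂ b₁ b₂) :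
    bt₁ = (1 - 2 * p₁) / 2 ∧ bt₂ = (1 - 2 * p₂) / 2 := by
  have key : corrSqRisk p₁ p₂ bt₁ bt₂ =
      corrSqRisk p₁ p₂ ((1 - 2 * p₁) / 2) ((1 - 2 * p₂) / 2)
        + (bt₁ - (1 - 2 * p₁) / 2) ^ 2 + (bt₂ - (1 - 2 * p₂) / 2) ^ 2 := by
    unfold corrSqRisk; ring
  have h := hmin ((1 - 2 * p₁) / 2) ((1 - 2 * p₂) / 2)
  constructor <;> nlinarith [sq_nonneg (bt₁ - (1 - 2 * p₁) / 2), sq_nonneg (bt₂ - (1 - 2 * p₂) / 2)]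
end

section
/- For the distribution D with atoms ((-1,1),1) w.p. 1/4, ((-1,-1),-1) w.p. 1/2, ((1,-1),1) w.p. 1/4, with Asy-In noise rates p₁=0.1, p₂=0.2, the corrupted squared-risk minimizer is (b̃₁*, b̃₂*) = (0.4, 0.3). The clean 0-1 risk of sign(0.4x₁ + 0.3x₂) is 1/4, while the clean 0-1 risk of the clean squared-risk minimizer sign(0.5x₁ + 0.5x₂) is 1/2. Hence the squared loss is not Asy-In attribute-noise robust. -/
/-- Clean 0-1 risk of f(x)=b₁x₁+b₂x₂ under D, with the convention that
zero output counts as an error (indicator of y·f(x) ≤ 0). -/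
noncomputable def cleanRisk01 (b₁ b₂ : ℝ) : ℝ :=
  (1/4) * (if (1 : ℝ) * (b₁ * (-1) + b₂ * 1) ≤ 0 then 1 else 0)
    + (1/2) * (if (-1 : ℝ) * (b₁ * (-1) + b₂ * (-1)) ≤ 0 then 1 else 0)
    + (1/4) * (if (1 : ℝ) * (b₁ * 1 + b₂ * (-1)) ≤ 0 then 1 else 0)

/-- With p₁ = 0.1, p₂ = 0.2 the corrupted squared-risk minimizer is (0.4, 0.3);
its clean 0-1 risk is 1/4 whereas the clean squared-risk minimizer (0.5, 0.5)
has clean 0-1 risk 1/2: squared loss is not Asy-In attribute-noise robust. -/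
theorem sq_not_asyin_robust :
    (∀ b₁ b₂ : ℝ, corrSqRisk 0.1 0.2 0.4 0.3 ≤ corrSqRisk 0.1 0.2 b₁ b₂) ∧
    cleanRisk01 0.4 0.3 = 1/4 ∧
    cleanRisk01 0.5 0.5 = 1/2 ∧
    cleanRisk01 0.4 0.3 ≠ cleanRisk01 0.5 0.5 := by
  refine ⟨?_, ?_, ?_, ?_⟩
  · intro b₁ b₂
    unfold corrSqRisk
    nlinarith [sq_nonneg (b₁ - 0.4), sq_nonneg (b₂ - 0.3), sq_nonneg (b₁ + b₂ - 0.7)]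
  · unfold cleanRisk01; norm_num
  · unfold cleanRisk01; norm_num
  · unfold cleanRisk01; norm_num
end
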